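/- arXiv:2501.02925 — 7 statements merged into one kernel-verified Lean document; each statement's English description precedes it below -/
import Mathlib

section
/- For a prime power q = p^α and any integer r, the binomial coefficient C(r-1, q-1) is divisible by p if and only if r is not divisible by q. -/
/-!
By Vandermonde's identity, `C(x + p^α, k) ≡ C(x, k) [ZMOD p]` for `k < p^α`, since `p` divides
`C(p^α, j)` for `0 < j < p^α`. Hence `C(r - 1, q - 1)` modulo `p` only depends on `m = r % q`:
it is `C(-1, q - 1) = ±1` when `m = 0`, and `C(m - 1, q - 1) = 0` when `0 < m < q`.
-/

open Finset in
theorem Ring.prime_dvd_choose_add_prime_pow_sub_choose {R : Type*} [CommRing R] [BinomialRing R]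
    {p α k : ℕ} (hp : p.Prime) (hk : k < p ^ α) (x : R) :
    (p : R) ∣ choose (x + (p ^ α : ℕ)) k - choose x k := by
  rw [add_choose_eq k (Commute.all _ _), Nat.sum_antidiagonal_eq_sum_range_succ_mk,
    sum_range_succ, Nat.sub_self, choose_zero_right, mul_one, add_sub_cancel_right]
  refine dvd_sum fun i hi => ?_
  have hi : i < k := mem_range.mp hi
  rw [choose_natCast]
  exact (Nat.cast_dvd_cast (hp.dvd_choose_pow (by omega) (by omega))).mul_left _

theorem Int.periodic_choose_cast_zmod {p α k : ℕ} (hp : p.Prime) (hk : k < p ^ α) :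
    Function.Periodic (fun x : ℤ => ((Ring.choose x k : ℤ) : ZMod p)) (p ^ α : ℕ) := fun x =>
  ((ZMod.intCast_eq_intCast_iff_dvd_sub _ _ _).mpr
    (Ring.prime_dvd_choose_add_prime_pow_sub_choose hp hk x)).symm

theorem Ring.choose_neg_one {R : Type*} [CommRing R] [BinomialRing R] (n : ℕ) :
    choose (-1 : R) n = (-1) ^ n := by
  rw [choose_neg, add_sub_cancel_left, choose_natCast, Nat.choose_self, Nat.cast_one,
    Units.smul_def, zsmul_eq_mul, mul_one, Int.cast_negOnePow_natCast]

theorem stmt0_general (p α : ℕ) (hp : p.Prime) (q : ℕ) (hq : q = p ^ α) (r : ℤ) :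
    (p : ℤ) ∣ Ring.choose (r - 1) (q - 1) ↔ ¬ (q : ℤ) ∣ r := by
  have := Fact.mk hp
  have hq0 : 0 < q := hq ▸ pow_pos hp.pos α
  have hper : Function.Periodic (fun x : ℤ => ((Ring.choose x (q - 1) : ℤ) : ZMod p)) q := by
    subst hq; exact Int.periodic_choose_cast_zmod hp (by omega)
  have hred : ((Ring.choose (r - 1) (q - 1) : ℤ) : ZMod p) = Ring.choose (r % q - 1) (q - 1) := by
    have := hper.int_mul (r / q) (r % q - 1)
    have hdiv : r % q - 1 + r / q * q = r - 1 := by have := Int.ediv_mul_add_emod r q; lia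
    rwa [Int.cast_id, hdiv] at this
  rw [← ZMod.intCast_zmod_eq_zero_iff_dvd, hred, Int.dvd_iff_emod_eq_zero]
  obtain h | h := eq_or_ne (r % q) 0
  · simp [h, Ring.choose_neg_one]
  · have h0 : 0 < r % q := lt_of_le_of_ne (Int.emod_nonneg r (by omega)) h.symm
    have hlt : r % q < q := Int.emod_lt_of_pos r (by omega)
    obtain ⟨n, hn, hnq⟩ : ∃ n : ℕ, r % q - 1 = n ∧ n < q - 1 :=
      ⟨(r % q - 1).toNat, by omega, by omega⟩
    simp [h, hn, Ring.choose_natCast, Nat.choose_eq_zero_of_lt hnq]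

/-- For a prime power `q = p^α` and any integer `r`, the generalized binomial
coefficient `C(r-1, q-1)` is divisible by `p` iff `r` is not divisible by `q`. -/
theorem stmt0 (p α : ℕ) (hp : p.Prime) (hα : 1 ≤ α) (q : ℕ) (hq : q = p ^ α) (r : ℤ) :
    (p : ℤ) ∣ Ring.choose (r - 1) (q - 1) ↔ ¬ (q : ℤ) ∣ r :=
  stmt0_general p α hp q hq r
end

section
/- If f ∈ ℚ[x_1,...,x_n] is a polynomial such that f(v) ∈ ℤ for every v ∈ {0,1}^n, then the multilinearization of f has integer coefficients, i.e. lies in ℤ[x_1,...,x_n]. -/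
open MvPolynomial Finset

lemma degreeOf_one' {σ R : Type*} [CommRing R] (i : σ) :
    (1 : MvPolynomial σ R).degreeOf i = 0 := by
  rw [← MvPolynomial.C_1]; exact MvPolynomial.degreeOf_C _ _

lemma degreeOf_neg' {σ R : Type*} [CommRing R] (i : σ) (p : MvPolynomial σ R) :
    (-p).degreeOf i = p.degreeOf i := by
  simp [MvPolynomial.degreeOf_eq_sup, MvPolynomial.support_neg]

/-- If a rational polynomial takes integer values on `{0,1}^n`, then its
multilinearization (the unique multilinear polynomial agreeing with it on `{0,1}^n`)
has integer coefficients. -/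
theorem stmt3 (n : ℕ) (f : MvPolynomial (Fin n) ℚ)
    (hf : ∀ v : Fin n → ℚ, (∀ i, v i = 0 ∨ v i = 1) → ∃ z : ℤ, MvPolynomial.eval v f = z) :
    ∃ g : MvPolynomial (Fin n) ℤ, (∀ i, g.degreeOf i ≤ 1) ∧
      ∀ v : Fin n → ℚ, (∀ i, v i = 0 ∨ v i = 1) →
        MvPolynomial.eval v (MvPolynomial.map (Int.castRingHom ℚ) g) =
          MvPolynomial.eval v f := by
  classical
  set ind : Finset (Fin n) → (Fin n → ℚ) := fun S i => if i ∈ S then 1 else 0 with hind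
  have hbool : ∀ S : Finset (Fin n), ∀ i, ind S i = 0 ∨ ind S i = 1 := by
    intro S i
    by_cases h : i ∈ S <;> simp [ind, h]
  choose z hz using fun S => hf (ind S) (hbool S)
  set q : Finset (Fin n) → Fin n → MvPolynomial (Fin n) ℤ :=
    fun S j => if j ∈ S then X j else 1 - X j with hq
  refine ⟨∑ S : Finset (Fin n), C (z S) * ∏ j : Fin n, q S j, ?_, ?_⟩
  · intro i
    apply le_trans (degreeOf_sum_le _ _ _)
    apply Finset.sup_le
    intro S _
    refine le_trans (degreeOf_mul_le _ _ _) ?_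
    rw [degreeOf_C, zero_add]
    have h0 : ∀ j : Fin n, j ≠ i → (q S j).degreeOf i = 0 := by
      intro j hj
      by_cases h : j ∈ S
      · simp [q, h, degreeOf_X, hj.symm]
      · have : (q S j).degreeOf i ≤ 0 := by
          simp only [q, if_neg h, sub_eq_add_neg]
          refine le_trans (degreeOf_add_le _ _ _) ?_
          simp only [degreeOf_neg', degreeOf_one', max_le_iff, le_refl, true_and]
          rw [degreeOf_X, if_neg hj.symm]
        omega
    have h1 : (q S i).degreeOf i ≤ 1 := by
      by_cases h : i ∈ S
      · simp [q, h, degreeOf_X]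
      · simp only [q, if_neg h, sub_eq_add_neg]
        refine le_trans (degreeOf_add_le _ _ _) ?_
        simp only [degreeOf_neg', degreeOf_one', max_le_iff]
        constructor
        · omega
        · rw [degreeOf_X]; split <;> omega
    calc (∏ j : Fin n, q S j).degreeOf i ≤ ∑ j : Fin n, (q S j).degreeOf i :=
          degreeOf_prod_le _ _ _
      _ = (q S i).degreeOf i := by
          rw [Finset.sum_eq_single i]
          · intro j _ hj; exact h0 j hj
          · intro h; exact absurd (Finset.mem_univ i) h
      _ ≤ 1 := h1
  · intro v hv
    have hev : ∀ S : Finset (Fin n),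
        MvPolynomial.eval v (MvPolynomial.map (Int.castRingHom ℚ) (∏ j : Fin n, q S j)) =
          ∏ j : Fin n, (if j ∈ S then v j else 1 - v j) := by
      intro S
      rw [map_prod, map_prod]
      congr 1
      funext j
      by_cases h : j ∈ S <;> simp [q, h]
    set Sv : Finset (Fin n) := Finset.univ.filter (fun i => v i = 1) with hSv
    have hprod : ∀ S : Finset (Fin n),
        (∏ j : Fin n, (if j ∈ S then v j else 1 - v j)) = if S = Sv then 1 else 0 := by
      intro S
      by_cases hS : S = Sv
      · subst hS
        rw [if_pos rfl]
        apply Finset.prod_eq_one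
        intro j _
        by_cases h : j ∈ Sv
        · simp only [hSv, Finset.mem_filter] at h
          simp [hSv, Finset.mem_filter, h.2]
        · simp only [hSv, Finset.mem_filter, Finset.mem_univ, true_and] at h
          rcases hv j with h0 | h1
          · simp [hSv, Finset.mem_filter, h0]
          · exact absurd h1 h
      · rw [if_neg hS]
        have : ∃ j : Fin n, (j ∈ S ∧ j ∉ Sv) ∨ (j ∉ S ∧ j ∈ Sv) := by
          by_contra hcon
          push_neg at hcon
          apply hS
          ext j
          rcases hcon j with ⟨h1, h2⟩
          constructor
          · intro h; by_contra h'; exact h' (h1 h)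
          · intro h; by_contra h'; exact (h2 h') h
        obtain ⟨j, hj⟩ := this
        apply Finset.prod_eq_zero (Finset.mem_univ j)
        rcases hj with ⟨h1, h2⟩ | ⟨h1, h2⟩
        · simp only [hSv, Finset.mem_filter, Finset.mem_univ, true_and] at h2
          rcases hv j with h0 | hone
          · simp [h1, h0]
          · exact absurd hone h2
        · simp only [hSv, Finset.mem_filter, Finset.mem_univ, true_and] at h2
          simp [h1, h2]
    have hvind : ind Sv = v := by
      funext j
      rcases hv j with h0 | h1
      · simp [ind, hSv, Finset.mem_filter, h0]
      · simp [ind, hSv, Finset.mem_filter, h1]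
    have hterm : ∀ S : Finset (Fin n),
        MvPolynomial.eval v (MvPolynomial.map (Int.castRingHom ℚ)
          (C (z S) * ∏ j : Fin n, q S j)) = if S = Sv then (z S : ℚ) else 0 := by
      intro S
      rw [map_mul, map_mul, hev S, hprod S]
      simp only [MvPolynomial.map_C, MvPolynomial.eval_C]
      split <;> simp
    rw [map_sum, map_sum]
    simp only [hterm]
    rw [Fintype.sum_ite_eq' Sv]
    rw [← hz Sv, hvind]
end

section
/- Let q = p^α be a prime power, a ∈ {0,...,q-1}, and define L_a(x) := (-1)^{q-1} C(x-a-1, q-1) ∈ ℚ[x]. Then L_a(a) ≡ 1 (mod p) and L_a(b) ≡ 0 (mod p) for every b ∈ {0,...,q-1} with b ≠ a. Moreover L_a takes integer values on integers. -/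
open Polynomial

lemma ringChoose_neg_succ (d k : ℕ) :
    Ring.choose (-(d + 1 : ℤ)) k = (-1) ^ k * ((d + k).choose k : ℤ) := by
  have hfac : ((k.factorial : ℤ)) ≠ 0 := by exact_mod_cast k.factorial_ne_zero
  apply mul_left_cancel₀ hfac
  have h := Ring.descPochhammer_eq_factorial_smul_choose (R := ℤ) (-(d + 1 : ℤ)) k
  rw [← Polynomial.eval_eq_smeval] at h
  have h2 := ascPochhammer_eval_neg_eq_descPochhammer (R := ℤ) (-(d + 1 : ℤ)) k
  rw [neg_neg] at h2
  have h3 : (ascPochhammer ℤ k).eval ((d + 1 : ℤ)) = ((d + 1).ascFactorial k : ℤ) := by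
    have := ascPochhammer_eval_cast (S := ℤ) k (d + 1)
    rw [ascPochhammer_nat_eq_ascFactorial] at this
    push_cast at this
    exact this.symm
  have h4 : (descPochhammer ℤ k).eval (-(d + 1 : ℤ)) = (-1) ^ k * ((d + 1).ascFactorial k : ℤ) := by
    have := h2
    rw [h3] at this
    have hsq : ((-1 : ℤ) ^ k) * ((-1 : ℤ) ^ k) = 1 := by
      rw [← pow_add, Even.neg_one_pow ⟨k, rfl⟩]
    calc (descPochhammer ℤ k).eval (-(d + 1 : ℤ))
        = ((-1) ^ k * (-1) ^ k) * (descPochhammer ℤ k).eval (-(d + 1 : ℤ)) := by rw [hsq, one_mul]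
      _ = (-1) ^ k * ((d + 1).ascFactorial k : ℤ) := by rw [mul_assoc, ← this]
  rw [nsmul_eq_mul] at h
  rw [← h, h4, Nat.ascFactorial_eq_factorial_mul_choose]
  push_cast; ring

lemma digit_lt (p : ℕ) (hp : 2 ≤ p) : ∀ α e : ℕ, e < p ^ α - 1 → ∃ i < α, e / p ^ i % p < p - 1
  | 0, e, he => by simp at he
  | α + 1, e, he => by
    by_cases h0 : e % p < p - 1
    · exact ⟨0, Nat.succ_pos α, by simpa using h0⟩
    · have hmod : e % p = p - 1 := by
        have := Nat.mod_lt e (show 0 < p by omega); omega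
      have hdiv : e / p < p ^ α - 1 := by
        have h1 : e = p * (e / p) + (p - 1) := by
          conv_lhs => rw [← Nat.div_add_mod e p]
          omega
        have h3 : 1 ≤ p ^ α := Nat.one_le_pow _ _ (by omega)
        by_contra hc
        push_neg at hc
        have hge : p * (p ^ α - 1) ≤ p * (e / p) := Nat.mul_le_mul_left p hc
        have hle : p ≤ p * p ^ α := Nat.le_mul_of_pos_right p (by positivity)
        have heq : p * (p ^ α - 1) + p = p ^ (α + 1) := by
          rw [Nat.mul_sub, pow_succ']
          omega
        omega
      obtain ⟨i, hi, hlt⟩ := digit_lt p hp α (e / p) hdiv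
      refine ⟨i + 1, by omega, ?_⟩
      rwa [pow_succ', ← Nat.div_div_eq_div_mul]

lemma dvd_key (p α : ℕ) (hp : p.Prime) (hα : 1 ≤ α) (d : ℕ) (hd1 : 1 ≤ d)
    (hd2 : d ≤ p ^ α - 1) : p ∣ (d + (p ^ α - 1)).choose (p ^ α - 1) := by
  have hp2 : 2 ≤ p := hp.two_le
  have hq1 : 1 ≤ p ^ α := Nat.one_le_pow _ _ (by omega)
  set n := d + (p ^ α - 1) with hn
  set k := p ^ α - 1 with hk
  set e := d - 1 with he
  have hen : n = p ^ α + e := by omega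
  have he2 : e < p ^ α - 1 := by omega
  obtain ⟨i, hi, hdig⟩ := digit_lt p hp2 α e he2
  set j := α - i with hj
  have hj1 : 1 ≤ j := by omega
  have hpow : p ^ i * p ^ j = p ^ α := by rw [← pow_add]; congr 1; omega
  have hipos : 0 < p ^ i := by positivity
  have hjpos : 1 ≤ p ^ j := Nat.one_le_pow _ _ (by omega)
  have hj2 : p ^ j = p * p ^ (j - 1) := by
    rw [← pow_succ']; congr 1; omega
  have hj3 : 1 ≤ p ^ (j - 1) := Nat.one_le_pow _ _ (by omega)
  have hplej : p ≤ p * p ^ (j - 1) := Nat.le_mul_of_pos_right p (by positivity)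
  have hilejn : p ^ i ≤ p ^ i * p ^ j := Nat.le_mul_of_pos_right _ (by positivity)
  -- bounds for Lucas with α + 1 digits
  have hn1 : n < p ^ (α + 1) := by
    have h2 : p ^ (α + 1) = p * p ^ α := by ring
    have h4 : 2 * p ^ α ≤ p * p ^ α := Nat.mul_le_mul_right _ hp2
    omega
  have hk1 : k < p ^ (α + 1) := by
    have : p ^ α < p ^ (α + 1) := Nat.pow_lt_pow_succ (by omega)
    omega
  have hlucas := @Choose.choose_modEq_prod_range_choose_nat n k p (Fact.mk hp) (α + 1) hn1 hk1
  -- digit of n at position i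
  have hnd : n / p ^ i % p = e / p ^ i % p := by
    have hsplit : n = p ^ i * p ^ j + e := by rw [hen, ← hpow]
    rw [hsplit, Nat.mul_add_div hipos, hj2, Nat.mul_add_mod]
  -- digit of k at position i
  have hkd : k / p ^ i % p = p - 1 := by
    have hmulsub : p ^ i * (p ^ j - 1) = p ^ i * p ^ j - p ^ i := by
      rw [Nat.mul_sub, Nat.mul_one]
    have hsplit : k = p ^ i * (p ^ j - 1) + (p ^ i - 1) := by
      rw [hmulsub]; omega
    have hdivk : k / p ^ i = p ^ j - 1 := by
      rw [hsplit, Nat.mul_add_div hipos, Nat.div_eq_of_lt (by omega)]; omega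
    have hmulsub2 : p * (p ^ (j - 1) - 1) = p * p ^ (j - 1) - p := by
      rw [Nat.mul_sub, Nat.mul_one]
    have hrw : p ^ j - 1 = (p - 1) + p * (p ^ (j - 1) - 1) := by
      rw [hmulsub2]; omega
    rw [hdivk, hrw, Nat.add_mul_mod_self_left, Nat.mod_eq_of_lt (by omega)]
  have hzero : (n / p ^ i % p).choose (k / p ^ i % p) = 0 := by
    rw [hnd, hkd]
    exact Nat.choose_eq_zero_of_lt hdig
  have hprod : (∏ m ∈ Finset.range (α + 1), (n / p ^ m % p).choose (k / p ^ m % p)) = 0 :=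
    Finset.prod_eq_zero (Finset.mem_range.mpr (by omega)) hzero
  rw [hprod] at hlucas
  exact (Nat.modEq_zero_iff_dvd).mp hlucas

/-- The Lagrange-type polynomial `L_a(x) = (-1)^(q-1) C(x-a-1, q-1)` satisfies
`L_a(a) ≡ 1 (mod p)` and `L_a(b) ≡ 0 (mod p)` for `b ∈ {0,...,q-1}`, `b ≠ a`
(its values on integers are integers, expressed here via `Ring.choose` over `ℤ`). -/
theorem stmt4 (p α : ℕ) (hp : p.Prime) (hα : 1 ≤ α) (q : ℕ) (hq : q = p ^ α)
    (a : ℕ) (ha : a < q) :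
    ((-1 : ℤ) ^ (q - 1) * Ring.choose ((a : ℤ) - a - 1) (q - 1)) ≡ 1 [ZMOD p] ∧
    ∀ b : ℕ, b < q → b ≠ a →
      ((-1 : ℤ) ^ (q - 1) * Ring.choose ((b : ℤ) - a - 1) (q - 1)) ≡ 0 [ZMOD p] := by
  have hp2 : 2 ≤ p := hp.two_le
  have hq2 : 2 ≤ q := by
    rw [hq]
    calc 2 ≤ p := hp2
    _ = p ^ 1 := (pow_one p).symm
    _ ≤ p ^ α := Nat.pow_le_pow_right (by omega) hα
  constructor
  · have h1 : (a : ℤ) - a - 1 = -(((0 : ℕ) : ℤ) + 1) := by push_cast; ring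
    rw [h1, ringChoose_neg_succ 0 (q - 1)]
    have h2 : (-1 : ℤ) ^ (q - 1) * ((-1) ^ (q - 1) * (((0 + (q - 1)).choose (q - 1)) : ℤ)) = 1 := by
      rw [Nat.zero_add, Nat.choose_self, Nat.cast_one, mul_one, ← pow_add,
        Even.neg_one_pow ⟨q - 1, rfl⟩]
    rw [h2]
  · intro b hb hne
    rcases lt_or_gt_of_ne hne with hlt | hgt
    · -- b < a
      have h1 : (b : ℤ) - a - 1 = -(((a - b : ℕ) : ℤ) + 1) := by
        push_cast [Nat.cast_sub hlt.le]; ring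
      rw [h1, ringChoose_neg_succ (a - b) (q - 1)]
      have hdvd : (p : ℤ) ∣ ((((a - b) + (q - 1)).choose (q - 1)) : ℤ) := by
        have := dvd_key p α hp hα (a - b) (by omega) (by omega)
        rw [← hq] at this
        exact_mod_cast Int.natCast_dvd_natCast.mpr this
      have heq : (-1 : ℤ) ^ (q - 1) * ((-1) ^ (q - 1) *
          ((((a - b) + (q - 1)).choose (q - 1)) : ℤ)) =
          ((((a - b) + (q - 1)).choose (q - 1)) : ℤ) := by
        rw [← mul_assoc, ← pow_add, Even.neg_one_pow ⟨q - 1, rfl⟩, one_mul]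
      rw [heq]
      exact Int.modEq_zero_iff_dvd.mpr hdvd
    · -- b > a
      have h1 : (b : ℤ) - a - 1 = ((b - a - 1 : ℕ) : ℤ) := by
        have : ((b - a - 1 : ℕ) : ℤ) = (b : ℤ) - a - 1 := by omega
        omega
      have hc : b - a - 1 < q - 1 := by omega
      rw [h1, Ring.choose_natCast, Nat.choose_eq_zero_of_lt hc, Nat.cast_zero, mul_zero]
end

section
/- Let q = p^α be a prime power and L a proper subset of {0,...,q-1}. Then there exists a univariate polynomial F_L(x) ∈ ℚ[x] of degree at most q-1 such that: (1) F_L(t) ∈ ℤ for each t ∈ ℤ; (2) F_L(m) ≡ 1 (mod p) for every integer m with m mod q ∉ L; and (3) F_L(s) ≡ 0 (mod p) for every integer s with s mod q ∈ L. -/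
/-!
Take `F_L(x) = ∑_{a < q, a ∉ L} C(x - a - 1, q - 1)` (the sign `(-1)^(q-1)` of the usual
construction is `≡ 1 (mod p)` and is left out). By Vandermonde, `C(t + q, k) - C(t, k)` is a
sum of multiples of `C(q, j)` with `0 < j ≤ k`, and these are divisible by `p` when `k < q = p^α`;
so `t ↦ C(t, q - 1) mod p` has period `q`. Evaluating at `0 ≤ t < q` shows that `C(t, q - 1)` is
`1` modulo `p` when `t ≡ -1 (mod q)` and `0` otherwise, hence `F_L(t) ≡ [t mod q ∉ L] (mod p)`.
-/

open Polynomial Finset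
open scoped Nat

lemma ZMod.eq_natCast_iff_val_eq {n a : ℕ} (ha : a < n) (x : ZMod n) : x = a ↔ x.val = a := by
  have : NeZero n := ⟨by omega⟩
  rw [← (ZMod.val_injective n).eq_iff, ZMod.val_natCast_of_lt ha]

lemma cast_choose_add_prime_pow {p α k : ℕ} (hp : p.Prime) (hk : k < p ^ α) (t : ℤ) :
    ((Ring.choose (t + (p ^ α : ℕ)) k : ℤ) : ZMod p) = Ring.choose t k := by
  rw [Ring.add_choose_eq k (Commute.all _ _), Int.cast_sum,
    sum_eq_single_of_mem ((k, 0) : ℕ × ℕ) (by simp)]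
  · simp
  rintro ⟨i, j⟩ hij hne
  have hj : j ≠ 0 := by rintro rfl; simp_all
  rw [Ring.choose_natCast, Int.cast_mul, Int.cast_natCast,
    (ZMod.natCast_eq_zero_iff _ _).2 (hp.dvd_choose_pow hj (by simp at hij; omega)), mul_zero]

lemma periodic_cast_choose {p α k : ℕ} (hp : p.Prime) (hk : k < p ^ α) :
    Function.Periodic (fun t : ℤ ↦ ((Ring.choose t k : ℤ) : ZMod p)) (p ^ α : ℕ) :=
  cast_choose_add_prime_pow hp hk

lemma cast_choose_emod_prime_pow {p α k : ℕ} (hp : p.Prime) (hk : k < p ^ α) (t : ℤ) :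
    ((Ring.choose (t % (p ^ α : ℕ)) k : ℤ) : ZMod p) = Ring.choose t k := by
  conv_rhs => rw [← Int.emod_add_mul_ediv t (p ^ α : ℕ), mul_comm]
  exact ((periodic_cast_choose hp hk).int_mul _ _).symm

lemma cast_choose_prime_pow_sub_one {p α : ℕ} (hp : p.Prime) (t : ℤ) :
    ((Ring.choose t (p ^ α - 1) : ℤ) : ZMod p) = if (t : ZMod (p ^ α)) = -1 then 1 else 0 := by
  have hq : 0 < p ^ α := pow_pos hp.pos α
  have : NeZero (p ^ α) := ⟨hq.ne'⟩
  have hneg : (-1 : ZMod (p ^ α)) = ((p ^ α - 1 : ℕ) : ZMod (p ^ α)) := by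
    rw [Nat.cast_sub hq, ZMod.natCast_self]; simp
  rw [← cast_choose_emod_prime_pow hp (Nat.sub_lt hq one_pos), ← ZMod.val_intCast,
    Ring.choose_natCast, hneg]
  simp only [ZMod.eq_natCast_iff_val_eq (Nat.sub_lt hq one_pos)]
  rcases (Nat.le_sub_one_of_lt (ZMod.val_lt (t : ZMod (p ^ α)))).lt_or_eq with h | h
  · simp [Nat.choose_eq_zero_of_lt h, h.ne]
  · simp [h]

noncomputable def binomialPolynomial (k : ℕ) : ℚ[X] := (k ! : ℚ)⁻¹ • descPochhammer ℚ k

lemma eval_binomialPolynomial (k : ℕ) (x : ℚ) :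
    (binomialPolynomial k).eval x = Ring.choose x k := by
  rw [binomialPolynomial, eval_smul, Ring.choose_eq_smul, ← descPochhammer_map (Int.castRingHom ℚ),
    eval_map, ← eval₂_smulOneHom_eq_smeval, Subsingleton.elim RingHom.smulOneHom (Int.castRingHom ℚ)]

lemma natDegree_binomialPolynomial_le (k : ℕ) : (binomialPolynomial k).natDegree ≤ k :=
  (natDegree_smul_le _ _).trans (descPochhammer_natDegree ℚ k).le

noncomputable def separatingPolynomial (q : ℕ) (L : Finset ℕ) : ℚ[X] :=
  ∑ a ∈ range q \ L, (binomialPolynomial (q - 1)).comp (X - C ((a : ℚ) + 1))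

lemma natDegree_separatingPolynomial_le (q : ℕ) (L : Finset ℕ) :
    (separatingPolynomial q L).natDegree ≤ q - 1 := by
  refine natDegree_sum_le_of_forall_le _ _ fun a _ ↦ natDegree_comp_le.trans ?_
  rw [natDegree_X_sub_C, mul_one]
  exact natDegree_binomialPolynomial_le _

lemma eval_intCast_separatingPolynomial (q : ℕ) (L : Finset ℕ) (t : ℤ) :
    (separatingPolynomial q L).eval (t : ℚ) =
      ((∑ a ∈ range q \ L, Ring.choose (t - a - 1) (q - 1) : ℤ) : ℚ) := by
  simp only [separatingPolynomial, eval_finsetSum, eval_comp, eval_sub, eval_X, eval_C,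
    eval_binomialPolynomial, Int.cast_sum]
  refine sum_congr rfl fun a _ ↦ ?_
  simpa [sub_sub] using (Ring.map_choose (Int.castRingHom ℚ) (t - a - 1) (q - 1)).symm

lemma cast_sum_choose_prime_pow_sub_one {p α : ℕ} (hp : p.Prime) (L : Finset ℕ) (t : ℤ) :
    ((∑ a ∈ range (p ^ α) \ L, Ring.choose (t - a - 1) (p ^ α - 1) : ℤ) : ZMod p) =
      if (t % (p ^ α : ℕ)).toNat ∈ L then 0 else 1 := by
  have : NeZero (p ^ α) := ⟨(pow_pos hp.pos α).ne'⟩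
  have hterm : ∀ a ∈ range (p ^ α) \ L, ((Ring.choose (t - a - 1) (p ^ α - 1) : ℤ) : ZMod p) =
      if (t : ZMod (p ^ α)).val = a then 1 else 0 := by
    intro a ha
    have hcond : ((t - a - 1 : ℤ) : ZMod (p ^ α)) = -1 ↔ (t : ZMod (p ^ α)).val = a := by
      rw [← ZMod.eq_natCast_iff_val_eq (by simp_all)]
      push_cast
      constructor <;> intro h <;> linear_combination h
    rw [cast_choose_prime_pow_sub_one hp]
    exact if_congr hcond rfl rfl
  rw [Int.cast_sum, sum_congr rfl hterm, sum_ite_eq, ← ZMod.val_intCast, Int.toNat_natCast]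
  simp [ZMod.val_lt]

theorem stmt5_general (p α : ℕ) (hp : p.Prime) (q : ℕ) (hq : q = p ^ α)
    (L : Finset ℕ) :
    ∃ F : Polynomial ℚ, F.natDegree ≤ q - 1 ∧
      (∀ t : ℤ, ∃ z : ℤ, F.eval (t : ℚ) = z) ∧
      (∀ m : ℤ, (m % (q : ℤ)).toNat ∉ L → ∀ z : ℤ, F.eval (m : ℚ) = z → z ≡ 1 [ZMOD p]) ∧
      (∀ s : ℤ, (s % (q : ℤ)).toNat ∈ L → ∀ z : ℤ, F.eval (s : ℚ) = z → z ≡ 0 [ZMOD p]) := by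
  subst hq
  have hmod (t z : ℤ) (hz : (separatingPolynomial (p ^ α) L).eval (t : ℚ) = z) :
      (z : ZMod p) = if (t % (p ^ α : ℕ)).toNat ∈ L then 0 else 1 := by
    rw [eval_intCast_separatingPolynomial, Int.cast_inj] at hz
    rw [← hz, cast_sum_choose_prime_pow_sub_one hp]
  refine ⟨separatingPolynomial (p ^ α) L, natDegree_separatingPolynomial_le _ _,
    fun t ↦ ⟨_, eval_intCast_separatingPolynomial _ _ t⟩, fun m hm z hz ↦ ?_, fun s hs z hz ↦ ?_⟩
  · rw [← ZMod.intCast_eq_intCast_iff, hmod m z hz, if_neg hm, Int.cast_one]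
  · rw [← ZMod.intCast_eq_intCast_iff, hmod s z hz, if_pos hs, Int.cast_zero]

/-- Existence of a separating polynomial: for a prime power `q = p^α` and a proper
subset `L ⊊ {0,...,q-1}`, there is `F_L ∈ ℚ[x]` of degree at most `q-1`, integer
valued on `ℤ`, with `F_L(m) ≡ 1 (mod p)` when `m mod q ∉ L` and `F_L(s) ≡ 0 (mod p)`
when `s mod q ∈ L`. -/
theorem stmt5 (p α : ℕ) (hp : p.Prime) (hα : 1 ≤ α) (q : ℕ) (hq : q = p ^ α)
    (L : Finset ℕ) (hL : L ⊂ Finset.range q) :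
    ∃ F : Polynomial ℚ, F.natDegree ≤ q - 1 ∧
      (∀ t : ℤ, ∃ z : ℤ, F.eval (t : ℚ) = z) ∧
      (∀ m : ℤ, (m % (q : ℤ)).toNat ∉ L → ∀ z : ℤ, F.eval (m : ℚ) = z → z ≡ 1 [ZMOD p]) ∧
      (∀ s : ℤ, (s % (q : ℤ)).toNat ∈ L → ∀ z : ℤ, F.eval (s : ℚ) = z → z ≡ 0 [ZMOD p]) :=
  stmt5_general p α hp q hq L
end

section
/- Let q = p^α be a prime power, L a proper subset of {0,...,q-1}, and F_L(x) := Σ_{a ∈ {0,...,q-1}\L} (-1)^{q-1} C(x-a-1, q-1). Then for all integers m, t we have F_L(t + mq) ≡ F_L(t) (mod p), i.e. F_L mod p is periodic with period q on the integers. -/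
/-!
By Vandermonde, `C(x + q, k) = Σ_{i + j = k} C(x, i) C(q, j)`. For `q = p^α` and `k < q` every
term with `0 < j` vanishes mod `p`, since then `0 < j < q` and `p ∣ C(q, j)`. Hence each summand
`C(x - a - 1, q - 1)` of `F_L` is `q`-periodic mod `p`, and so is `F_L`.
-/

theorem Int.ringChoose_add_prime_pow_modEq {p : ℕ} (hp : p.Prime) (n : ℕ) {k : ℕ}
    (hk : k < p ^ n) (x : ℤ) :
    Ring.choose (x + (p ^ n : ℕ)) k ≡ Ring.choose x k [ZMOD p] := by
  rw [Ring.add_choose_eq _ (Commute.all _ _),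
    Finset.Nat.sum_antidiagonal_eq_sum_range_succ
      (fun i j => Ring.choose x i * Ring.choose ((p ^ n : ℕ) : ℤ) j),
    Finset.sum_range_succ, Nat.sub_self, Ring.choose_zero_right, mul_one]
  have hdvd : (p : ℤ) ∣ ∑ i ∈ Finset.range k,
      Ring.choose x i * Ring.choose ((p ^ n : ℕ) : ℤ) (k - i) := by
    refine Finset.dvd_sum fun i hi => Dvd.dvd.mul_left ?_ _
    have hik : i < k := Finset.mem_range.mp hi
    rw [Ring.choose_natCast]
    exact Int.natCast_dvd_natCast.mpr (hp.dvd_choose_pow (by omega) (by omega))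
  simpa using (Int.modEq_zero_iff_dvd.mpr hdvd).add_right (Ring.choose x k)

theorem Int.periodic_ringChoose_cast_zmod {p : ℕ} (hp : p.Prime) (n : ℕ) {k : ℕ}
    (hk : k < p ^ n) :
    Function.Periodic (fun x : ℤ => ((Ring.choose x k : ℤ) : ZMod p)) (p ^ n : ℕ) := fun x =>
  (ZMod.intCast_eq_intCast_iff _ _ p).mpr (Int.ringChoose_add_prime_pow_modEq hp n hk x)

theorem stmt6_general (p α : ℕ) (hp : p.Prime) (q : ℕ) (hq : q = p ^ α)
    (L : Finset ℕ) (t m : ℤ) :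
    (∑ a ∈ Finset.range q \ L, (-1 : ℤ) ^ (q - 1) * Ring.choose (t + m * q - a - 1) (q - 1)) ≡
    (∑ a ∈ Finset.range q \ L, (-1 : ℤ) ^ (q - 1) * Ring.choose (t - a - 1) (q - 1))
      [ZMOD p] := by
  subst hq
  have hk : p ^ α - 1 < p ^ α := Nat.sub_lt (pow_pos hp.pos α) one_pos
  have hperiodic := (Int.periodic_ringChoose_cast_zmod hp α hk).int_mul m
  rw [← ZMod.intCast_eq_intCast_iff]
  push_cast
  refine Finset.sum_congr rfl fun a _ => congrArg _ ?_
  rw [show t + m * p ^ α - a - 1 = t - a - 1 + m * p ^ α by ring]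
  simpa using hperiodic (t - a - 1)

/-- The concrete separating polynomial
`F_L(x) = Σ_{a ∈ {0,...,q-1} \ L} (-1)^(q-1) C(x-a-1, q-1)` is periodic mod `p`
with period `q` on the integers: `F_L(t + m q) ≡ F_L(t) (mod p)`. -/
theorem stmt6 (p α : ℕ) (hp : p.Prime) (hα : 1 ≤ α) (q : ℕ) (hq : q = p ^ α)
    (L : Finset ℕ) (hL : L ⊂ Finset.range q) (t m : ℤ) :
    (∑ a ∈ Finset.range q \ L, (-1 : ℤ) ^ (q - 1) * Ring.choose (t + m * q - a - 1) (q - 1)) ≡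
    (∑ a ∈ Finset.range q \ L, (-1 : ℤ) ^ (q - 1) * Ring.choose (t - a - 1) (q - 1))
      [ZMOD p] :=
  stmt6_general p α hp q hq L t m
end

section
/- Let p be a prime, q = p^α a prime power, and L ⊊ {0,...,q-1} nonempty. If F ⊆ 2^[n] is a family of subsets of {1,...,n} such that |E| mod q ∉ L for every E ∈ F, and |E ∩ F'| mod q ∈ L for all distinct E, F' ∈ F, then |F| ≤ Σ_{j=0}^{q-1} C(n, j). -/
/-!
For `E ∈ 𝓕` let `g_E : 2^[n] → 𝔽_p` send `T` to `1` if `|T ∩ E| mod q ∉ L` and to `0` otherwise.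
Then `g_E(E) = 1` while `g_E(F) = 0` for `F ≠ E`, so the `g_E` are linearly independent.
By Newton interpolation, `[r mod q ∉ L] = Σ_{k<q} c_k C(r mod q, k)` for some `c_k ∈ 𝔽_p`, and by
Lucas' theorem `C(r mod q, k) ≡ C(r, k) (mod p)` for `k < q`. As `C(|T ∩ E|, k)` counts the
`k`-subsets `S ⊆ E` with `S ⊆ T`, every `g_E` lies in the span of the functions `T ↦ [S ⊆ T]`
with `|S| < q`, a space of dimension at most `Σ_{j<q} C(n, j)`.
-/

open Finset

theorem Nat.cast_choose_eq_cast_choose_mod_pow {p : ℕ} [Fact p.Prime] {a k : ℕ} (hk : k < p ^ a)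
    (m : ℕ) : (m.choose k : ZMod p) = ((m % p ^ a).choose k : ZMod p) := by
  have lucas (m : ℕ) : (m.choose k : ZMod p) =
      ∏ i ∈ range a, ((m / p ^ i % p).choose (k / p ^ i % p) : ZMod p) := by
    have h := Choose.choose_modEq_choose_mul_prod_range_choose (n := m) (k := k) (p := p) a
    rw [Nat.div_eq_of_lt hk, Nat.choose_zero_right, Nat.cast_one, one_mul] at h
    exact_mod_cast (ZMod.intCast_eq_intCast_iff _ _ p).mpr h
  rw [lucas, lucas]
  refine prod_congr rfl fun i hi => ?_
  have hia : i < a := mem_range.mp hi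
  rw [← Nat.add_sub_of_le hia.le, pow_add, Nat.mod_mul_right_div_self,
    Nat.mod_mod_of_dvd _ (dvd_pow_self p (by omega))]

theorem exists_sum_choose_smul_eq {G : Type*} [AddCommGroup G] (f : ℕ → G) (N : ℕ) :
    ∃ c : ℕ → G, ∀ r < N, ∑ k ∈ range N, r.choose k • c k = f r := by
  refine ⟨fun k => (fwdDiff 1)^[k] f 0, fun r hr => ?_⟩
  have newton := shift_eq_sum_fwdDiff_iter 1 f r 0
  rw [zero_add, smul_eq_mul, mul_one] at newton
  rw [newton]
  refine (sum_subset (range_subset_range.mpr (by omega)) fun k _ hk => ?_).symm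
  rw [Nat.choose_eq_zero_of_lt (by simpa using hk), zero_smul]

theorem linearIndependent_of_apply_eq_zero {K X ι : Type*} [Field K] (v : ι → X → K) (x : ι → X)
    (hdiag : ∀ i, v i (x i) ≠ 0) (hoff : ∀ i j, i ≠ j → v i (x j) = 0) :
    LinearIndependent K v := by
  classical
  rw [linearIndependent_iff']
  intro s c hsum i hi
  have h := congrFun hsum (x i)
  rw [Finset.sum_apply, sum_eq_single i (fun j _ hji => by simp [hoff j i hji]) (by simp [hi])] at h
  simpa [hdiag i] using h

theorem Fintype.card_finset_card_lt {ι : Type*} [Fintype ι] (q : ℕ) :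
    Fintype.card {S : Finset ι // S.card < q} = ∑ j ∈ range q, (Fintype.card ι).choose j := by
  rw [Fintype.card_subtype, card_eq_sum_card_fiberwise (f := Finset.card) (t := range q)
    (fun S hS => mem_range.mpr (mem_filter.mp hS).2)]
  refine Finset.sum_congr rfl fun j hj => ?_
  rw [← card_univ, ← card_powersetCard]
  congr 1
  ext S
  simp only [mem_filter, mem_univ, true_and, mem_powersetCard_univ, and_iff_right_iff_imp]
  exact fun h => h ▸ mem_range.mp hj

section SubsetIndicator

variable {ι : Type*} [DecidableEq ι] (R : Type*) [CommRing R]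

def subsetIndicator (S : Finset ι) : Finset ι → R := fun T => if S ⊆ T then 1 else 0

theorem sum_powersetCard_subsetIndicator (E T : Finset ι) (k : ℕ) :
    ∑ S ∈ E.powersetCard k, subsetIndicator R S T = ((T ∩ E).card.choose k : R) := by
  have h : (E.powersetCard k).filter (· ⊆ T) = (T ∩ E).powersetCard k := by
    ext S
    simp only [mem_filter, mem_powersetCard, subset_inter_iff]
    tauto
  simp only [subsetIndicator, sum_boole, h, card_powersetCard]

def subsetIndicatorSpan (q : ℕ) : Submodule R (Finset ι → R) :=
  Submodule.span R (Set.range fun S : {S : Finset ι // S.card < q} => subsetIndicator R S.1)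

theorem sum_choose_card_inter_smul_mem_subsetIndicatorSpan {q : ℕ} (c : ℕ → R) (E : Finset ι) :
    (fun T => ∑ k ∈ range q, (T ∩ E).card.choose k • c k) ∈ subsetIndicatorSpan R q := by
  have h : (fun T => ∑ k ∈ range q, (T ∩ E).card.choose k • c k) =
      ∑ k ∈ range q, ∑ S ∈ E.powersetCard k, c k • subsetIndicator R S := by
    funext T
    simp only [Finset.sum_apply, Pi.smul_apply, smul_eq_mul, ← mul_sum,
      sum_powersetCard_subsetIndicator, nsmul_eq_mul, mul_comm]
  rw [h]
  refine Submodule.sum_mem _ fun k hk => Submodule.sum_mem _ fun S hS => ?_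
  refine Submodule.smul_mem _ _ (Submodule.subset_span ⟨⟨S, ?_⟩, rfl⟩)
  rw [(mem_powersetCard.mp hS).2]
  exact mem_range.mp hk

theorem finrank_subsetIndicatorSpan_le [Fintype ι] (K : Type*) [Field K] (q : ℕ) :
    Module.finrank K (subsetIndicatorSpan K q : Submodule K (Finset ι → K)) ≤
      ∑ j ∈ range q, (Fintype.card ι).choose j :=
  (finrank_range_le_card _).trans (Fintype.card_finset_card_lt q).le

end SubsetIndicator

theorem stmt7_general (p α n : ℕ) (hp : p.Prime) (q : ℕ) (hq : q = p ^ α)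
    (L : Finset ℕ)
    (𝓕 : Finset (Finset (Fin n)))
    (havoid : ∀ E ∈ 𝓕, E.card % q ∉ L)
    (hint : ∀ E ∈ 𝓕, ∀ F' ∈ 𝓕, E ≠ F' → (E ∩ F').card % q ∈ L) :
    𝓕.card ≤ ∑ j ∈ Finset.range q, n.choose j := by
  classical
  have : Fact p.Prime := ⟨hp⟩
  have hq0 : 0 < q := hq ▸ pow_pos hp.pos α
  let f : ℕ → ZMod p := fun r => if r ∈ L then 0 else 1
  obtain ⟨c, hc⟩ := exists_sum_choose_smul_eq f q
  let g : 𝓕 → Finset (Fin n) → ZMod p := fun E T => f ((T ∩ E).card % q)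
  have hg_mem (E : 𝓕) : g E ∈ subsetIndicatorSpan (ZMod p) q := by
    convert sum_choose_card_inter_smul_mem_subsetIndicatorSpan (ZMod p) c E.1 using 2 with T
    simp only [g, ← hc _ (Nat.mod_lt _ hq0), nsmul_eq_mul]
    refine sum_congr rfl fun k hk => ?_
    rw [hq] at hk ⊢
    rw [← Nat.cast_choose_eq_cast_choose_mod_pow (mem_range.mp hk)]
  have hg_indep : LinearIndependent (ZMod p) g := by
    refine linearIndependent_of_apply_eq_zero g Subtype.val (fun E => ?_) fun E F hEF => ?_
    · simp [g, f, havoid E.1 E.2]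
    · simp [g, f, inter_comm, hint E.1 E.2 F.1 F.2 (Subtype.val_injective.ne hEF)]
  calc 𝓕.card = Fintype.card 𝓕 := (Fintype.card_coe 𝓕).symm
    _ ≤ (Set.range g).finrank (ZMod p) := linearIndependent_iff_card_le_finrank_span.mp hg_indep
    _ ≤ Module.finrank (ZMod p) (subsetIndicatorSpan (ZMod p) q) :=
      Submodule.finrank_mono (Submodule.span_le.mpr (Set.range_subset_iff.mpr hg_mem))
    _ ≤ ∑ j ∈ range q, n.choose j := by
      simpa only [Fintype.card_fin] using finrank_subsetIndicatorSpan_le (ι := Fin n) (ZMod p) _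

/-- `m(n,s,q) ≤ Σ_{j=0}^{q-1} C(n,j)`: a `q`-modular `L`-avoiding `L`-intersecting
family has size at most `Σ_{j=0}^{q-1} C(n,j)`. -/
theorem stmt7 (p α n : ℕ) (hp : p.Prime) (hα : 1 ≤ α) (q : ℕ) (hq : q = p ^ α)
    (L : Finset ℕ) (hL : L ⊂ Finset.range q) (hLne : L.Nonempty)
    (𝓕 : Finset (Finset (Fin n)))
    (havoid : ∀ E ∈ 𝓕, E.card % q ∉ L)
    (hint : ∀ E ∈ 𝓕, ∀ F' ∈ 𝓕, E ≠ F' → (E ∩ F').card % q ∈ L) :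
    𝓕.card ≤ ∑ j ∈ Finset.range q, n.choose j :=
  stmt7_general p α n hp q hq L 𝓕 havoid hint
end

section
/- Let p be a prime, q = p^α a prime power, k ≥ 2 an integer, and L ⊊ {0,...,q-1} nonempty. Let F ⊆ 2^[n] be a set system such that |E| mod q ∉ L for every E ∈ F, and for any k distinct sets F_1,...,F_k ∈ F the intersection satisfies |F_1 ∩ ... ∩ F_k| mod q ∈ L. Then |F| ≤ (k-1) Σ_{j=0}^{q-1} C(n, j). -/
/-! Over `𝔽_p`, `C(m + q, j) ≡ C(m, j)` for `j < q = p ^ α`, so Newton's forward-difference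
formula writes every `q`-periodic `g : ℕ → 𝔽_p` as `g m = ∑_{j < q} c_j C(m, j)`. For
`g m = [m mod q ∉ L]` and `C(|E ∩ T|, j) = #{S ⊆ E : |S| = j, S ⊆ T}`, the functions
`φ_E : T ↦ g |E ∩ T|` therefore lie in the span of the indicators `T ↦ [S ⊆ T]`, `|S| < q`,
of dimension at most `∑_{j < q} C(n, j)`.

Induct on `k`. Choose `B ⊆ F` such that `(φ_E)_{E ∈ B}` is a basis of the span of all `φ_E`.
If `k - 1` sets of `F \ B` had an intersection `y` with `|y| mod q ∉ L`, then some `φ_E`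
with `E ∈ B` would not vanish at `y` (as `φ_{E₁}(y) ≠ 0` for any of them), so adding `E`
would give `k` sets whose intersection `E ∩ y` has size `∉ L` mod `q`. Hence `F \ B` is
`(k - 1)`-wise intersecting, and for `k = 1` the family is empty, as `|E| mod q ∉ L`. -/

open Finset Polynomial fwdDiff

section Binomial

variable {R : Type*} [CommRing R] {p : ℕ} [Fact p.Prime] [CharP R p]

theorem periodic_cast_choose_of_lt {α j : ℕ} (hj : j < p ^ α) :
    Function.Periodic (fun m : ℕ ↦ (m.choose j : R)) (p ^ α) := by
  intro m
  have h : ((X + 1 : R[X]) ^ (m + p ^ α)).coeff j = ((X + 1 : R[X]) ^ m).coeff j := by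
    rw [pow_add, add_pow_char_pow, one_pow, mul_add, mul_one, coeff_add, mul_comm,
      coeff_X_pow_mul', if_neg (not_le.mpr hj), zero_add]
  simpa only [coeff_X_add_one_pow] using h

theorem Function.Periodic.eq_sum_range_choose_mul_fwdDiff_iter {α : ℕ} {f : ℕ → R}
    (hf : Function.Periodic f (p ^ α)) (m : ℕ) :
    f m = ∑ j ∈ range (p ^ α), (m.choose j : R) * (Δ_[1])^[j] f 0 := by
  have hr : m % p ^ α < p ^ α := Nat.mod_lt _ (pow_pos (Fact.out : p.Prime).pos α)
  have newton := shift_eq_sum_fwdDiff_iter 1 f (m % p ^ α) 0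
  rw [zero_add, smul_eq_mul, mul_one, hf.map_mod_nat] at newton
  rw [newton, sum_subset (range_subset_range.mpr hr)]
  · refine sum_congr rfl fun j hj ↦ ?_
    rw [nsmul_eq_mul, (periodic_cast_choose_of_lt (R := R) (mem_range.mp hj)).map_mod_nat m]
  · intro j _ hj
    rw [Nat.choose_eq_zero_of_lt (by simpa using hj), zero_smul]

end Binomial

theorem card_filter_card_lt {ι : Type*} [Fintype ι] (q : ℕ) :
    #{S : Finset ι | #S < q} = ∑ j ∈ range q, (Fintype.card ι).choose j := by
  rw [card_eq_sum_card_fiberwise (f := card) (t := range q) (fun S hS ↦ by simpa using hS)]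
  refine sum_congr rfl fun j hj ↦ ?_
  rw [← card_univ, ← card_powersetCard]
  congr 1
  ext S
  simp only [mem_range] at hj
  simp only [mem_filter, mem_univ, true_and, mem_powersetCard, subset_univ]
  omega

section SetSystem

variable {ι : Type*} [DecidableEq ι] (R : Type*) [CommRing R]

def supsetIndicator (S : Finset ι) : Finset ι → R := fun T ↦ if S ⊆ T then 1 else 0

theorem cast_choose_card_inter (E T : Finset ι) (j : ℕ) :
    ((#(E ∩ T)).choose j : R) = ∑ S ∈ E.powersetCard j, supsetIndicator R S T := by
  have h : (E ∩ T).powersetCard j = (E.powersetCard j).filter (· ⊆ T) := by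
    ext S
    simp only [mem_powersetCard, mem_filter, subset_inter_iff]
    tauto
  rw [← card_powersetCard, h]
  simp only [supsetIndicator, sum_boole]

variable {R}

theorem Function.Periodic.comp_card_inter_mem_span {p α : ℕ} [Fact p.Prime] [CharP R p]
    {f : ℕ → R} (hf : Function.Periodic f (p ^ α)) (E : Finset ι) :
    (fun T ↦ f #(E ∩ T)) ∈ Submodule.span R
      (Set.range fun S : {S : Finset ι // #S < p ^ α} ↦ supsetIndicator R S.1) := by
  have hsum : (fun T ↦ f #(E ∩ T)) = ∑ j ∈ range (p ^ α), ∑ S ∈ E.powersetCard j,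
      (Δ_[1])^[j] f 0 • supsetIndicator R S := by
    ext T
    simp only [hf.eq_sum_range_choose_mul_fwdDiff_iter, cast_choose_card_inter, sum_mul,
      Finset.sum_apply, Pi.smul_apply, smul_eq_mul, mul_comm]
  rw [hsum]
  refine Submodule.sum_mem _ fun j hj ↦ Submodule.sum_mem _ fun S hS ↦
    Submodule.smul_mem _ _ (Submodule.subset_span ⟨⟨S, ?_⟩, rfl⟩)
  rw [(mem_powersetCard.mp hS).2]
  exact mem_range.mp hj

end SetSystem

open Module Submodule

theorem Submodule.exists_mem_apply_ne_zero_of_mem_span {R M X : Type*} [Semiring R]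
    [AddCommMonoid M] [Module R M] {s : Set (X → M)} {v : X → M} (hv : v ∈ span R s) {x : X}
    (hx : v x ≠ 0) : ∃ w ∈ s, w x ≠ 0 := by
  by_contra! h
  have hker : span R s ≤ LinearMap.ker (LinearMap.proj (R := R) (φ := fun _ : X ↦ M) x) :=
    span_le.mpr fun w hw ↦ h w hw
  exact hx (hker hv)

section KWise

variable {β K V : Type*} [Field K] [AddCommGroup V] [Module K V]

theorem exists_subset_card_le_finrank_span (f : β → V) (s : Finset β) :
    ∃ B ⊆ s, #B ≤ finrank K (span K (f '' s)) ∧ f '' s ⊆ span K (f '' B) := by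
  obtain ⟨b, hbs, -, hspan, hli⟩ :=
    exists_linearIndepOn_extension (linearIndepOn_empty K f) (Set.empty_subset (s : Set β))
  lift b to Finset β using s.finite_toSet.subset hbs
  refine ⟨b, by simpa using hbs, ?_, hspan⟩
  have := FiniteDimensional.span_of_finite K (s.finite_toSet.image f)
  calc #b = finrank K (span K (Set.range fun x : (b : Set β) ↦ f x)) := by
        rw [finrank_span_eq_card hli]
        simp
    _ ≤ finrank K (span K (f '' s)) := by
        rw [← Set.image_eq_range]
        exact Submodule.finrank_mono (span_mono (Set.image_mono hbs))

variable [SemilatticeInf β] [OrderTop β] [DecidableEq β] {P : β → Prop} {f : β → β → K}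

theorem forall_card_eq_not_inf_sdiff (hf : ∀ E y, f E y ≠ 0 ↔ P (E ⊓ y)) {𝓖 B : Finset β}
    (hB : B ⊆ 𝓖) (hspan : f '' 𝓖 ⊆ span K (f '' B)) {t : ℕ}
    (hint : ∀ S ⊆ 𝓖, #S = t + 2 → ¬ P (S.inf id)) :
    ∀ S ⊆ 𝓖 \ B, #S = t + 1 → ¬ P (S.inf id) := by
  intro S hS hcard hP
  obtain ⟨E₁, hE₁⟩ : S.Nonempty := card_pos.mp (by omega)
  have hle : S.inf id ≤ E₁ := inf_le (f := id) hE₁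
  have hE₁y : f E₁ (S.inf id) ≠ 0 := by rwa [hf, inf_eq_right.mpr hle]
  obtain ⟨_, ⟨E, hEB, rfl⟩, hEy⟩ := exists_mem_apply_ne_zero_of_mem_span
    (hspan ⟨E₁, (mem_sdiff.mp (hS hE₁)).1, rfl⟩) hE₁y
  have hES : E ∉ S := fun h ↦ (mem_sdiff.mp (hS h)).2 hEB
  refine hint (insert E S) (insert_subset (hB hEB) (hS.trans sdiff_subset)) ?_ ?_
  · rw [card_insert_of_notMem hES, hcard]
  · rwa [inf_insert, id, ← hf]

theorem card_le_mul_finrank_span_of_forall_card_eq_not_inf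
    (hf : ∀ E y, f E y ≠ 0 ↔ P (E ⊓ y)) (t : ℕ) {𝓖 : Finset β} (havoid : ∀ E ∈ 𝓖, P E)
    (hint : ∀ S ⊆ 𝓖, #S = t + 1 → ¬ P (S.inf id)) :
    #𝓖 ≤ t * finrank K (span K (f '' 𝓖)) := by
  induction t generalizing 𝓖 with
  | zero =>
    have : 𝓖 = ∅ := eq_empty_of_forall_notMem fun E hE ↦
      hint {E} (singleton_subset_iff.mpr hE) (card_singleton E) (by simpa using havoid E hE)
    simp [this]
  | succ t ih =>
    obtain ⟨B, hB, hBcard, hspan⟩ := exists_subset_card_le_finrank_span (K := K) f 𝓖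
    have := FiniteDimensional.span_of_finite K (𝓖.finite_toSet.image f)
    have hrest := ih (fun E hE ↦ havoid E (mem_sdiff.mp hE).1)
      (forall_card_eq_not_inf_sdiff hf hB hspan hint)
    calc #𝓖 ≤ #(𝓖 \ B) + #B := card_le_card_sdiff_add_card
      _ ≤ t * finrank K (span K (f '' 𝓖)) + finrank K (span K (f '' 𝓖)) := by
        gcongr
        refine hrest.trans (Nat.mul_le_mul_left t (Submodule.finrank_mono (span_mono ?_)))
        exact Set.image_mono (by simp)
      _ = (t + 1) * finrank K (span K (f '' 𝓖)) := by ring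

end KWise

theorem stmt8_general (p α n k : ℕ) (hp : p.Prime) (q : ℕ) (hq : q = p ^ α)
    (hk : 2 ≤ k) (L : Finset ℕ)
    (𝓕 : Finset (Finset (Fin n)))
    (havoid : ∀ E ∈ 𝓕, E.card % q ∉ L)
    (hint : ∀ S : Finset (Finset (Fin n)), S ⊆ 𝓕 → S.card = k → (S.inf id).card % q ∈ L) :
    𝓕.card ≤ (k - 1) * ∑ j ∈ Finset.range q, n.choose j := by
  have := Fact.mk hp
  subst hq
  let g : ℕ → ZMod p := fun m ↦ if m % p ^ α ∈ L then 0 else 1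
  have hg : Function.Periodic g (p ^ α) := fun m ↦ by simp [g]
  let φ : Finset (Fin n) → Finset (Fin n) → ZMod p := fun E T ↦ g #(E ∩ T)
  calc #𝓕 ≤ (k - 1) * finrank (ZMod p) (span (ZMod p) (φ '' 𝓕)) :=
        card_le_mul_finrank_span_of_forall_card_eq_not_inf (P := fun y ↦ #y % p ^ α ∉ L)
          (fun E y ↦ by simp [φ, g]) (k - 1) havoid
          (fun S hS hcard ↦ not_not.mpr (hint S hS (by omega)))
    _ ≤ (k - 1) * finrank (ZMod p) (span (ZMod p) (Set.range
          fun S : {S : Finset (Fin n) // #S < p ^ α} ↦ supsetIndicator (ZMod p) S.1)) := by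
        gcongr
        exact Submodule.finrank_mono (span_le.mpr (by
          rintro _ ⟨E, -, rfl⟩
          exact hg.comp_card_inter_mem_span E))
    _ ≤ (k - 1) * Fintype.card {S : Finset (Fin n) // #S < p ^ α} := by
        gcongr
        exact finrank_range_le_card _
    _ = (k - 1) * ∑ j ∈ range (p ^ α), n.choose j := by
        rw [Fintype.card_subtype, card_filter_card_lt, Fintype.card_fin]

/-- Theorem main3: a `k`-wise `q`-modular `L`-avoiding `L`-intersecting family
has size at most `(k-1) Σ_{j=0}^{q-1} C(n,j)`. -/
theorem stmt8 (p α n k : ℕ) (hp : p.Prime) (hα : 1 ≤ α) (q : ℕ) (hq : q = p ^ α)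
    (hk : 2 ≤ k) (L : Finset ℕ) (hL : L ⊂ Finset.range q) (hLne : L.Nonempty)
    (𝓕 : Finset (Finset (Fin n)))
    (havoid : ∀ E ∈ 𝓕, E.card % q ∉ L)
    (hint : ∀ S : Finset (Finset (Fin n)), S ⊆ 𝓕 → S.card = k → (S.inf id).card % q ∈ L) :
    𝓕.card ≤ (k - 1) * ∑ j ∈ Finset.range q, n.choose j :=
  stmt8_general p α n k hp q hq hk L 𝓕 havoid hint
end
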